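/- Let F and G be sparseness measures with cost functions J_F and J_G on ℝⁿ, suppose F and G are non-decreasing on [0,∞) and the ratio t ↦ F(t)/G(t) is non-increasing on (0,∞), and let k ≥ 1. Then: (i) every linear subspace ν of ℝⁿ satisfying NSP at sparsity k for J_G also satisfies NSP at sparsity k for J_F; and (ii) every m×n real matrix A that satisfies RRC at sparsity k for J_G with some constant also satisfies RRC at sparsity k for J_F with some constant. -/

import Mathlib

/-!
If `F / G` is non-increasing, then at any level `t > 0`, with `c = F t / G t`, one has
`F ≤ c G` above `t` and `c G ≤ F` below `t`. So if `T` consists of largest entries of `w`,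
splitting them from the rest at a level `t > 0`, the inequality `J_G(w_T) < J_G(w_{Tᶜ})`
yields `J_F(w_T) < J_F(w_{Tᶜ})`; as `F` is non-decreasing, such a `T` is the worst case among
index sets of its size. This transfers the NSP vector by vector. The RRC is handled in the same
way through the robust null space property (RNSP), which is equivalent to it: RRC gives RNSP for
some `d > 0` by testing it on `x̄ = -w_T`, `x̂ = w_{Tᶜ}`, and RNSP gives RRC by splitting the
error into its components in `ker A` and `(ker A)ᗮ`.
-/

noncomputable section

/-- `F : ℝ → ℝ` is a sparseness measure: nonnegative on `[0,∞)`,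
vanishing exactly at `0`, and `F (|·|)` is subadditive on `ℝ`. -/
def SparsenessMeasure (F : ℝ → ℝ) : Prop :=
  (∀ t : ℝ, 0 ≤ t → 0 ≤ F t) ∧
  (∀ t : ℝ, 0 ≤ t → (F t = 0 ↔ t = 0)) ∧
  (∀ x y : ℝ, F |x + y| ≤ F |x| + F |y|)

/-- The cost function `J(x) = ∑ i, F |x i|` on `ℝⁿ`. -/
def costJ {n : ℕ} (F : ℝ → ℝ) (x : EuclideanSpace ℝ (Fin n)) : ℝ :=
  ∑ i, F |x i|

/-- The restricted cost `J(x_T) = ∑ i ∈ T, F |x i|`. -/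
def costJT {n : ℕ} (F : ℝ → ℝ) (T : Finset (Fin n)) (x : EuclideanSpace ℝ (Fin n)) : ℝ :=
  ∑ i ∈ T, F |x i|

/-- `x` has at most `k` nonzero entries. -/
def Sparse {n : ℕ} (k : ℕ) (x : EuclideanSpace ℝ (Fin n)) : Prop :=
  ∃ T : Finset (Fin n), T.card ≤ k ∧ ∀ i ∉ T, x i = 0

/-- The matrix `A` acting as a continuous linear map between Euclidean spaces. -/
def mulVecCLM {m n : ℕ} (A : Matrix (Fin m) (Fin n) ℝ) :
    EuclideanSpace ℝ (Fin n) →L[ℝ] EuclideanSpace ℝ (Fin m) :=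
  (((EuclideanSpace.equiv (Fin m) ℝ).symm : (Fin m → ℝ) →L[ℝ] EuclideanSpace ℝ (Fin m)).comp
    (Matrix.mulVecLin A).toContinuousLinearMap).comp
    ((EuclideanSpace.equiv (Fin n) ℝ) : EuclideanSpace ℝ (Fin n) →L[ℝ] (Fin n → ℝ))

/-- `A` satisfies the robust recovery condition at sparsity `k` for the cost `J_F`
with constant `C`: for every `k`-sparse `x̄`, every `ε > 0`, every noise `v` with
`‖v‖ ≤ ε`, and every feasible `x̂` with `J(x̂) ≤ J(x̄)`, one has `‖x̄ - x̂‖ ≤ C ε`. -/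
def RRC {m n : ℕ} (A : Matrix (Fin m) (Fin n) ℝ) (k : ℕ) (F : ℝ → ℝ) (C : ℝ) : Prop :=
  ∀ xbar : EuclideanSpace ℝ (Fin n), Sparse k xbar →
    ∀ ε : ℝ, 0 < ε →
      ∀ v : EuclideanSpace ℝ (Fin m), ‖v‖ ≤ ε →
        ∀ xhat : EuclideanSpace ℝ (Fin n),
          ‖mulVecCLM A xhat - (mulVecCLM A xbar + v)‖ ≤ ε →
            costJ F xhat ≤ costJ F xbar → ‖xbar - xhat‖ ≤ C * ε

/-- The robust null space condition with parameter `d` for `(A, k, J_F)`. -/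
def RNSP {m n : ℕ} (A : Matrix (Fin m) (Fin n) ℝ) (k : ℕ) (F : ℝ → ℝ) (d : ℝ) : Prop :=
  ∀ z ∈ LinearMap.ker (mulVecCLM A : EuclideanSpace ℝ (Fin n) →ₗ[ℝ] EuclideanSpace ℝ (Fin m)), z ≠ 0 →
    ∀ η : EuclideanSpace ℝ (Fin n), ‖η‖ < d * ‖z‖ →
      ∀ T : Finset (Fin n), T.card ≤ k →
        costJT F T (z + η) < costJT F Tᶜ (z + η)

/-- The subspace `ν` satisfies the null space property at sparsity `k` for `J_F`. -/
def NSP {n : ℕ} (ν : Submodule ℝ (EuclideanSpace ℝ (Fin n))) (k : ℕ) (F : ℝ → ℝ) : Prop :=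
  ∀ z ∈ ν, z ≠ 0 → ∀ T : Finset (Fin n), T.card ≤ k → costJT F T z < costJT F Tᶜ z

/-- The orthogonal projection onto `ν`, as a continuous linear map `ℝⁿ → ℝⁿ`. -/
def projCLM {n : ℕ} (ν : Submodule ℝ (EuclideanSpace ℝ (Fin n))) :
    EuclideanSpace ℝ (Fin n) →L[ℝ] EuclideanSpace ℝ (Fin n) :=
  ν.subtypeL.comp ν.orthogonalProjectionOnto

open Finset

section SplitsAt

variable {ι α β : Type*}

/-- `T` indexes `#T` largest values of `f` (ties broken arbitrarily). -/
def SplitsAt [LE α] (f : ι → α) (T : Finset ι) (t : α) : Prop :=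
  (∀ i ∈ T, t ≤ f i) ∧ ∀ i ∉ T, f i ≤ t

theorem exists_card_eq_splitsAt [Fintype ι] [LinearOrder α] [Nonempty α] (f : ι → α) :
    ∀ r ≤ Fintype.card ι, ∃ T : Finset ι, T.card = r ∧ ∃ t, SplitsAt f T t
  | 0, _ => by
    obtain ⟨M, hM⟩ := Finite.bddAbove_range f
    exact ⟨∅, rfl, M, by simp, fun i _ => hM (Set.mem_range_self i)⟩
  | r + 1, hr => by
    classical
    obtain ⟨T, hT, t, hle, hge⟩ := exists_card_eq_splitsAt f r (by omega)
    have hTc : Tᶜ.Nonempty := by rw [← card_pos, card_compl]; omega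
    obtain ⟨j, hj, hjmax⟩ := exists_max_image Tᶜ f hTc
    rw [mem_compl] at hj
    refine ⟨insert j T, by rw [card_insert_of_notMem hj, hT], f j, ?_, ?_⟩
    · intro i hi
      rcases mem_insert.mp hi with rfl | hi
      · exact le_rfl
      · exact (hge j hj).trans (hle i hi)
    · intro i hi
      rw [mem_insert, not_or] at hi
      exact hjmax i (mem_compl.mpr hi.2)

theorem SplitsAt.monotoneOn_comp [Preorder α] [Preorder β] {f : ι → α} {T : Finset ι} {t : α}
    {g : α → β} {s : Set α} (h : SplitsAt f T t) (hg : MonotoneOn g s) (hf : ∀ i, f i ∈ s)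
    (ht : t ∈ s) : SplitsAt (g ∘ f) T (g t) :=
  ⟨fun i hi => hg ht (hf i) (h.1 i hi), fun i hi => hg (hf i) ht (h.2 i hi)⟩

theorem SplitsAt.sum_le_sum [DecidableEq ι] [AddCommMonoid β] [PartialOrder β]
    [IsOrderedAddMonoid β] {f : ι → β} {T T' : Finset ι} {t : β} (h : SplitsAt f T' t)
    (hcard : T.card = T'.card) : ∑ i ∈ T, f i ≤ ∑ i ∈ T', f i := by
  have hsdiff : ∑ i ∈ T \ T', f i ≤ ∑ i ∈ T' \ T, f i :=
    calc ∑ i ∈ T \ T', f i ≤ (T \ T').card • t :=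
          sum_le_card_nsmul _ _ _ fun i hi => h.2 i (mem_sdiff.mp hi).2
      _ = (T' \ T).card • t := by rw [card_sdiff_comm hcard]
      _ ≤ ∑ i ∈ T' \ T, f i := card_nsmul_le_sum _ _ _ fun i hi => h.1 i (mem_sdiff.mp hi).1
  rw [← sum_inter_add_sum_sdiff T T', ← sum_inter_add_sum_sdiff T' T, inter_comm]
  exact add_le_add_right hsdiff _

end SplitsAt

section SparsenessMeasure

variable {n : ℕ} {F G : ℝ → ℝ}

theorem SparsenessMeasure.map_zero (hF : SparsenessMeasure F) : F 0 = 0 :=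
  (hF.2.1 0 le_rfl).mpr rfl

theorem SparsenessMeasure.pos (hF : SparsenessMeasure F) {t : ℝ} (ht : 0 < t) : 0 < F t :=
  (hF.1 t ht.le).lt_of_ne fun h => ht.ne' ((hF.2.1 t ht.le).mp h.symm)

theorem costJT_nonneg (hF : SparsenessMeasure F) (T : Finset (Fin n))
    (x : EuclideanSpace ℝ (Fin n)) : 0 ≤ costJT F T x :=
  sum_nonneg fun _ _ => hF.1 _ (abs_nonneg _)

theorem costJT_add_costJT_compl (T : Finset (Fin n)) (x : EuclideanSpace ℝ (Fin n)) :
    costJT F T x + costJT F Tᶜ x = costJ F x :=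
  sum_add_sum_compl T _

theorem le_ratio_mul (hG : SparsenessMeasure G)
    (hratio : ∀ s t : ℝ, 0 < s → s ≤ t → F t / G t ≤ F s / G s) {s t : ℝ} (ht : 0 < t)
    (hts : t ≤ s) : F s ≤ F t / G t * G s :=
  (div_le_iff₀ (hG.pos (ht.trans_le hts))).mp (hratio t s ht hts)

theorem ratio_mul_le (hF : SparsenessMeasure F) (hG : SparsenessMeasure G)
    (hratio : ∀ s t : ℝ, 0 < s → s ≤ t → F t / G t ≤ F s / G s) {s t : ℝ} (hs : 0 ≤ s)
    (hst : s ≤ t) : F t / G t * G s ≤ F s := by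
  rcases hs.eq_or_lt with rfl | hs
  · rw [hF.map_zero, hG.map_zero, mul_zero]
  · exact (le_div_iff₀ (hG.pos hs)).mp (hratio s t hs hst)

/-- With `c = F t / G t`, `F ≤ c G` above the level `t` and `c G ≤ F` below it. -/
theorem costJT_lt_compl_of_splitsAt (hF : SparsenessMeasure F) (hG : SparsenessMeasure G)
    (hratio : ∀ s t : ℝ, 0 < s → s ≤ t → F t / G t ≤ F s / G s)
    {w : EuclideanSpace ℝ (Fin n)} {T : Finset (Fin n)} {t : ℝ}
    (hsplit : SplitsAt (fun i => |w i|) T t) (ht : 0 < t)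
    (hGw : costJT G T w < costJT G Tᶜ w) : costJT F T w < costJT F Tᶜ w := by
  have hc : 0 < F t / G t := div_pos (hF.pos ht) (hG.pos ht)
  calc costJT F T w ≤ F t / G t * costJT G T w := by
        rw [costJT, costJT, mul_sum]
        exact sum_le_sum fun i hi => le_ratio_mul hG hratio ht (hsplit.1 i hi)
    _ < F t / G t * costJT G Tᶜ w := mul_lt_mul_of_pos_left hGw hc
    _ ≤ costJT F Tᶜ w := by
        rw [costJT, costJT, mul_sum]
        exact sum_le_sum fun i hi =>
          ratio_mul_le hF hG hratio (abs_nonneg _) (hsplit.2 i (mem_compl.mp hi))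

/-- It suffices to treat a set `T'` of `#T` largest entries: it carries at least as much
`F`-cost as `T`, and its splitting level is positive since `J_G(w_{T'ᶜ}) > 0`. -/
theorem costJT_lt_compl_of_ratio_antitone (hF : SparsenessMeasure F) (hG : SparsenessMeasure G)
    (hFmono : ∀ s t : ℝ, 0 ≤ s → s ≤ t → F s ≤ F t)
    (hratio : ∀ s t : ℝ, 0 < s → s ≤ t → F t / G t ≤ F s / G s)
    {w : EuclideanSpace ℝ (Fin n)} {k : ℕ}
    (hGw : ∀ T : Finset (Fin n), T.card ≤ k → costJT G T w < costJT G Tᶜ w)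
    {T : Finset (Fin n)} (hT : T.card ≤ k) : costJT F T w < costJT F Tᶜ w := by
  obtain ⟨T', hcard, t, hsplit⟩ :=
    exists_card_eq_splitsAt (fun i => |w i|) T.card (by simpa using T.card_le_univ)
  have hGw' := hGw T' (hcard ▸ hT)
  have ht : 0 < t := by
    by_contra! ht
    have hzero : costJT G T'ᶜ w = 0 := sum_eq_zero fun i hi => by
      rw [abs_nonpos_iff.mp ((hsplit.2 i (mem_compl.mp hi)).trans ht), abs_zero, hG.map_zero]
    linarith [costJT_nonneg hG T' w]
  have hle : costJT F T w ≤ costJT F T' w :=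
    (hsplit.monotoneOn_comp (fun a ha b _ hab => hFmono a b ha hab)
      (fun i => abs_nonneg (w i)) ht.le).sum_le_sum hcard.symm
  have hF' := costJT_lt_compl_of_splitsAt hF hG hratio hsplit ht hGw'
  linarith [costJT_add_costJT_compl (F := F) T w, costJT_add_costJT_compl (F := F) T' w]

theorem NSP.of_ratio_antitone {ν : Submodule ℝ (EuclideanSpace ℝ (Fin n))} {k : ℕ}
    (hF : SparsenessMeasure F) (hG : SparsenessMeasure G)
    (hFmono : ∀ s t : ℝ, 0 ≤ s → s ≤ t → F s ≤ F t)
    (hratio : ∀ s t : ℝ, 0 < s → s ≤ t → F t / G t ≤ F s / G s) (h : NSP ν k G) :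
    NSP ν k F := fun z hz hz0 _ hT =>
  costJT_lt_compl_of_ratio_antitone hF hG hFmono hratio (h z hz hz0) hT

theorem RNSP.of_ratio_antitone {m : ℕ} {A : Matrix (Fin m) (Fin n) ℝ} {k : ℕ} {d : ℝ}
    (hF : SparsenessMeasure F) (hG : SparsenessMeasure G)
    (hFmono : ∀ s t : ℝ, 0 ≤ s → s ≤ t → F s ≤ F t)
    (hratio : ∀ s t : ℝ, 0 < s → s ≤ t → F t / G t ≤ F s / G s) (h : RNSP A k G d) :
    RNSP A k F d := fun z hz hz0 η hη _ hT =>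
  costJT_lt_compl_of_ratio_antitone hF hG hFmono hratio (h z hz hz0 η hη) hT

end SparsenessMeasure

theorem exists_norm_le_mul_norm_of_mem_orthogonal_ker {𝕜 E E' : Type*} [RCLike 𝕜]
    [NormedAddCommGroup E] [InnerProductSpace 𝕜 E] [FiniteDimensional 𝕜 E]
    [NormedAddCommGroup E'] [NormedSpace 𝕜 E'] (f : E →ₗ[𝕜] E') :
    ∃ c > 0, ∀ x ∈ (LinearMap.ker f)ᗮ, ‖x‖ ≤ c * ‖f x‖ := by
  have hker : LinearMap.ker (f ∘ₗ (LinearMap.ker f)ᗮ.subtype) = ⊥ := by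
    rw [Submodule.eq_bot_iff]
    intro x hx
    exact Subtype.ext ((LinearMap.ker f).orthogonal_disjoint.le_bot ⟨hx, x.2⟩)
  obtain ⟨c, hc, hanti⟩ := LinearMap.exists_antilipschitzWith _ hker
  exact ⟨c, hc, fun x hx => hanti.le_mul_norm (map_zero _) ⟨x, hx⟩⟩

section Recovery

variable {n m : ℕ} {F : ℝ → ℝ}

/-- The paper's `x_T`. -/
def restrictTo (T : Finset (Fin n)) (x : EuclideanSpace ℝ (Fin n)) : EuclideanSpace ℝ (Fin n) :=
  WithLp.toLp 2 fun i => if i ∈ T then x i else 0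

@[simp]
theorem restrictTo_apply (T : Finset (Fin n)) (x : EuclideanSpace ℝ (Fin n)) (i : Fin n) :
    restrictTo T x i = if i ∈ T then x i else 0 :=
  rfl

theorem restrictTo_compl_add_restrictTo (T : Finset (Fin n)) (x : EuclideanSpace ℝ (Fin n)) :
    restrictTo Tᶜ x + restrictTo T x = x := by
  ext i
  by_cases hi : i ∈ T <;> simp [hi]

theorem costJ_restrictTo (hF0 : F 0 = 0) (T : Finset (Fin n)) (x : EuclideanSpace ℝ (Fin n)) :
    costJ F (restrictTo T x) = costJT F T x := by
  simp only [costJ, costJT, restrictTo_apply, apply_ite, abs_zero, hF0]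
  rw [sum_ite_mem, univ_inter]

theorem costJ_neg (x : EuclideanSpace ℝ (Fin n)) : costJ F (-x) = costJ F x := by
  simp [costJ]

/-- Feed `x̄ = -w_T` and `x̂ = w_{Tᶜ}` (so `x̂ - x̄ = w`) with zero noise into the RRC. -/
theorem RRC.norm_le_of_costJT_compl_le {A : Matrix (Fin m) (Fin n) ℝ} {k : ℕ} {C : ℝ}
    (h : RRC A k F C) (hF0 : F 0 = 0) {w : EuclideanSpace ℝ (Fin n)} {T : Finset (Fin n)}
    (hT : T.card ≤ k) (hcost : costJT F Tᶜ w ≤ costJT F T w) {ε : ℝ} (hε : 0 < ε)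
    (hAw : ‖mulVecCLM A w‖ ≤ ε) : ‖w‖ ≤ C * ε := by
  have hsub : restrictTo Tᶜ w - -restrictTo T w = w := by
    rw [sub_neg_eq_add, restrictTo_compl_add_restrictTo]
  have hsparse : Sparse k (-restrictTo T w) := ⟨T, hT, fun i hi => by simp [hi]⟩
  have hrec := h (-restrictTo T w) hsparse ε hε 0 (by simpa using hε.le) (restrictTo Tᶜ w)
    (by rwa [add_zero, ← map_sub, hsub])
    (by rwa [costJ_neg, costJ_restrictTo hF0, costJ_restrictTo hF0])
  rwa [norm_sub_rev, hsub] at hrec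

/-- A perturbation `η` with `‖η‖ < d ‖z‖`, `d = 1 / (2 (1 + C (‖A‖ + 1)))`, keeps `‖A (z + η)‖`
below `ε = (‖A‖ + 1) d ‖z‖` while `‖z + η‖ > (1 - d) ‖z‖ > C ε`. -/
theorem RRC.exists_rnsp {A : Matrix (Fin m) (Fin n) ℝ} {k : ℕ} {C : ℝ} (h : RRC A k F C)
    (hF0 : F 0 = 0) (hC : 0 ≤ C) : ∃ d > 0, RNSP A k F d := by
  set M := C * (‖mulVecCLM A‖ + 1)
  set d := 1 / (2 * (1 + M))
  have hM : 0 ≤ M := by positivity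
  have hdM : d * (1 + M) = 1 / 2 := by simp only [d]; field_simp
  refine ⟨d, by positivity, fun z hz hz0 η hη T hT => ?_⟩
  by_contra! hcost
  have hzpos : 0 < ‖z‖ := norm_pos_iff.mpr hz0
  have hAw : ‖mulVecCLM A (z + η)‖ ≤ (‖mulVecCLM A‖ + 1) * (d * ‖z‖) :=
    calc ‖mulVecCLM A (z + η)‖ = ‖mulVecCLM A η‖ := by
          rw [map_add, show mulVecCLM A z = 0 from hz, zero_add]
      _ ≤ ‖mulVecCLM A‖ * (d * ‖z‖) := (mulVecCLM A).le_opNorm η |>.trans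
          (mul_le_mul_of_nonneg_left hη.le (norm_nonneg _))
      _ ≤ (‖mulVecCLM A‖ + 1) * (d * ‖z‖) := by gcongr; linarith
  have hw := h.norm_le_of_costJT_compl_le hF0 hT hcost (by positivity) hAw
  have hlow : ‖z‖ - ‖η‖ ≤ ‖z + η‖ := by
    simpa using norm_sub_norm_le z (-η)
  have hCε : C * ((‖mulVecCLM A‖ + 1) * (d * ‖z‖)) = M * d * ‖z‖ := by ring
  have hz_lt : ‖z‖ < d * (1 + M) * ‖z‖ := by linarith
  rw [hdM] at hz_lt
  linarith

/-- On `T`, subadditivity gives `J(x̄_T) ≤ J(x̂_T) + J((x̂ - x̄)_T)`; off `T`, `x̂ = x̂ - x̄`. -/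
theorem costJT_compl_sub_le (hF : SparsenessMeasure F) {xbar xhat : EuclideanSpace ℝ (Fin n)}
    {T : Finset (Fin n)} (hsupp : ∀ i ∉ T, xbar i = 0) (hcost : costJ F xhat ≤ costJ F xbar) :
    costJT F Tᶜ (xhat - xbar) ≤ costJT F T (xhat - xbar) := by
  have hhat : costJ F xhat = costJT F T xhat + costJT F Tᶜ (xhat - xbar) := by
    rw [← costJT_add_costJT_compl T]
    congr 1
    refine sum_congr rfl fun i hi => ?_
    rw [PiLp.sub_apply, hsupp i (mem_compl.mp hi), sub_zero]
  have hbar : costJ F xbar = costJT F T xbar := by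
    rw [← costJT_add_costJT_compl T, add_eq_left]
    exact sum_eq_zero fun i hi => by rw [hsupp i (mem_compl.mp hi), abs_zero, hF.map_zero]
  have hsub : costJT F T xbar ≤ costJT F T xhat + costJT F T (xhat - xbar) := by
    rw [costJT, costJT, costJT, ← sum_add_distrib]
    refine sum_le_sum fun i _ => ?_
    simpa [abs_sub_comm] using hF.2.2 (xhat i) (xbar i - xhat i)
  linarith

theorem RNSP.mul_norm_le {A : Matrix (Fin m) (Fin n) ℝ} {k : ℕ} {d : ℝ} (h : RNSP A k F d)
    {z η : EuclideanSpace ℝ (Fin n)}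
    (hz : z ∈ LinearMap.ker (mulVecCLM A : EuclideanSpace ℝ (Fin n) →ₗ[ℝ] EuclideanSpace ℝ (Fin m)))
    {T : Finset (Fin n)} (hT : T.card ≤ k) (hcost : costJT F Tᶜ (z + η) ≤ costJT F T (z + η)) :
    d * ‖z‖ ≤ ‖η‖ := by
  by_contra! hlt
  have hz0 : z ≠ 0 := by
    rintro rfl
    rw [norm_zero, mul_zero] at hlt
    exact (norm_nonneg η).not_gt hlt
  exact (h z hz hz0 η hlt T hT).not_ge hcost

/-- Split the error `x̂ - x̄ = z + η` with `z ∈ ker A` and `η ⊥ ker A`: `η` is controlled by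
`‖A η‖ ≤ 2 ε`, and `z` by `η` through the RNSP. -/
theorem RNSP.exists_rrc {A : Matrix (Fin m) (Fin n) ℝ} {k : ℕ} {d : ℝ} (h : RNSP A k F d)
    (hF : SparsenessMeasure F) (hd : 0 < d) : ∃ C > 0, RRC A k F C := by
  set K := LinearMap.ker (mulVecCLM A : EuclideanSpace ℝ (Fin n) →ₗ[ℝ] EuclideanSpace ℝ (Fin m))
  obtain ⟨c, hc, hbound⟩ := exists_norm_le_mul_norm_of_mem_orthogonal_ker
    (mulVecCLM A : EuclideanSpace ℝ (Fin n) →ₗ[ℝ] EuclideanSpace ℝ (Fin m))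
  refine ⟨(1 + 1 / d) * (c * 2), by positivity, ?_⟩
  rintro xbar ⟨T, hT, hsupp⟩ ε - v hv xhat hfeas hcost
  obtain ⟨z, hz, η, hη, hdecomp⟩ := K.exists_add_mem_mem_orthogonal (xhat - xbar)
  have hAη : mulVecCLM A η = (mulVecCLM A xhat - (mulVecCLM A xbar + v)) + v := by
    rw [← zero_add (mulVecCLM A η), ← show mulVecCLM A z = 0 from hz, ← map_add, ← hdecomp,
      map_sub]
    abel
  have hη_le : ‖η‖ ≤ c * (2 * ε) :=
    calc ‖η‖ ≤ c * ‖mulVecCLM A η‖ := hbound η hη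
      _ ≤ c * (ε + ε) := by
          rw [hAη]
          exact mul_le_mul_of_nonneg_left ((norm_add_le _ _).trans (add_le_add hfeas hv)) hc.le
      _ = c * (2 * ε) := by ring
  have hz_le : d * ‖z‖ ≤ ‖η‖ :=
    h.mul_norm_le hz hT (hdecomp ▸ costJT_compl_sub_le hF hsupp hcost)
  calc ‖xbar - xhat‖ = ‖z + η‖ := by rw [norm_sub_rev, hdecomp]
    _ ≤ ‖z‖ + ‖η‖ := norm_add_le _ _
    _ ≤ ‖η‖ / d + ‖η‖ := by
        gcongr
        rwa [le_div_iff₀' hd]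
    _ = (1 + 1 / d) * ‖η‖ := by ring
    _ ≤ (1 + 1 / d) * (c * 2) * ε := by
        rw [mul_assoc, mul_assoc]
        gcongr

end Recovery

theorem stmt14_general {n : ℕ} (F G : ℝ → ℝ)
    (hF : SparsenessMeasure F) (hG : SparsenessMeasure G)
    (hFmono : ∀ s t : ℝ, 0 ≤ s → s ≤ t → F s ≤ F t)
    (hratio : ∀ s t : ℝ, 0 < s → s ≤ t → F t / G t ≤ F s / G s)
    (k : ℕ) :
    (∀ ν : Submodule ℝ (EuclideanSpace ℝ (Fin n)), NSP ν k G → NSP ν k F) ∧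
    (∀ m : ℕ, ∀ A : Matrix (Fin m) (Fin n) ℝ,
      (∃ C > 0, RRC A k G C) → (∃ C > 0, RRC A k F C)) := by
  refine ⟨fun ν hNSP => hNSP.of_ratio_antitone hF hG hFmono hratio, ?_⟩
  rintro m A ⟨C, hC, hRRC⟩
  obtain ⟨d, hd, hRNSP⟩ := hRRC.exists_rnsp hG.map_zero hC.le
  exact (hRNSP.of_ratio_antitone hF hG hFmono hratio).exists_rrc hF hd

/-- Lemma 9, comparison of sparseness measures: if `F, G` are
non-decreasing sparseness measures and `F/G` is non-increasing on `(0,∞)`, then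
(i) NSP for `J_G` implies NSP for `J_F` (for any subspace), and (ii) RRC for `J_G`
implies RRC for `J_F` (for any matrix, with some constants). -/
theorem stmt14 {n : ℕ} (F G : ℝ → ℝ)
    (hF : SparsenessMeasure F) (hG : SparsenessMeasure G)
    (hFmono : ∀ s t : ℝ, 0 ≤ s → s ≤ t → F s ≤ F t)
    (hGmono : ∀ s t : ℝ, 0 ≤ s → s ≤ t → G s ≤ G t)
    (hratio : ∀ s t : ℝ, 0 < s → s ≤ t → F t / G t ≤ F s / G s)
    (k : ℕ) (hk : 1 ≤ k) :
    (∀ ν : Submodule ℝ (EuclideanSpace ℝ (Fin n)), NSP ν k G → NSP ν k F) ∧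
    (∀ m : ℕ, ∀ A : Matrix (Fin m) (Fin n) ℝ,
      (∃ C > 0, RRC A k G C) → (∃ C > 0, RRC A k F C)) :=
  stmt14_general F G hF hG hFmono hratio k
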